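/- (Addition Theorem) Let n ∈ ℕ, a_0, ..., a_n ∈ ℝ, q_0 = 1 and 0 < q_i < 1 for i = 1, ..., n. Then for all real x and y, R(ā; q̄; x + y) = Σ_{r=0}^∞ (x^r / r!) · R^{(r)}(ā; q̄; y), where R^{(r)}(ā; q̄; y) = Σ_{m=r}^∞ (y^{m−r} / (m−r)!) (ā; q̄)_m is the r-th derivative of R(ā; q̄; ·) at y, and the series over r converges. -/

import Mathlib

/-!
Since `|q i| ≤ 1`, every factor of `(ā; q̄)_m` is bounded by `C = ∑ |a i|`, so `|(ā; q̄)_m| ≤ C ^ m`.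
Hence the double series `∑_{r,m} x^r/r! · y^m/m! · (ā; q̄)_{m+r}` converges absolutely. Summing it
by rows gives the right-hand side; summing along the antidiagonals `r + m = k` and using the
binomial theorem gives `∑_k (x+y)^k/k! · (ā; q̄)_k`.
-/

open Finset
open scoped Nat

theorem HasSum.sum_antidiagonal {α A : Type*} [AddCommMonoid α] [TopologicalSpace α]
    [ContinuousAdd α] [RegularSpace α] [AddMonoid A] [HasAntidiagonal A]
    {f : A × A → α} {s : α} (hf : HasSum f s) :
    HasSum (fun n ↦ ∑ p ∈ antidiagonal n, f p) s :=
  (HasAntidiagonal.sigmaAntidiagonalEquivProd.hasSum_iff.2 hf).sigma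
    fun n ↦ (antidiagonal n).hasSum f

theorem add_pow_div_factorial {K : Type*} [Field K] [CharZero K] (x y : K) (n : ℕ) :
    (x + y) ^ n / n ! = ∑ p ∈ antidiagonal n, x ^ p.1 / p.1 ! * (y ^ p.2 / p.2 !) := by
  rw [(Commute.all x y).add_pow', sum_div]
  refine sum_congr rfl fun p hp ↦ ?_
  have : ((p.1 + p.2)! : K) ≠ 0 := Nat.cast_ne_zero.2 (Nat.factorial_ne_zero _)
  rw [← mem_antidiagonal.mp hp, nsmul_eq_mul, Nat.cast_add_choose]
  field_simp

theorem abs_sum_mul_pow_le {ι : Type*} [Fintype ι] (a q : ι → ℝ) (hq : ∀ i, |q i| ≤ 1) (j : ℕ) :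
    |∑ i, a i * q i ^ j| ≤ ∑ i, |a i| :=
  (abs_sum_le_sum_abs _ _).trans <| sum_le_sum fun i _ ↦ by
    rw [abs_mul, abs_pow]
    exact mul_le_of_le_one_right (abs_nonneg _) (pow_le_one₀ (abs_nonneg _) (hq i))

theorem abs_prod_range_le_pow {S : ℕ → ℝ} {C : ℝ} (hS : ∀ j, |S j| ≤ C) (m : ℕ) :
    |∏ j ∈ range m, S j| ≤ C ^ m :=
  calc |∏ j ∈ range m, S j| = ∏ j ∈ range m, |S j| := abs_prod _ _
    _ ≤ ∏ _j ∈ range m, C := prod_le_prod (fun j _ ↦ abs_nonneg _) fun j _ ↦ hS j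
    _ = C ^ m := by rw [prod_const, card_range]

theorem summable_pow_div_factorial_mul_shift {c : ℕ → ℝ} {C : ℝ} (hc : ∀ m, |c m| ≤ C ^ m)
    (x y : ℝ) :
    Summable fun p : ℕ × ℕ ↦ x ^ p.1 / p.1 ! * (y ^ p.2 / p.2 ! * c (p.2 + p.1)) := by
  have hC : 0 ≤ C := by simpa using (abs_nonneg _).trans (hc 1)
  have hmaj := (Real.summable_pow_div_factorial (|x| * C)).mul_of_nonneg
    (Real.summable_pow_div_factorial (|y| * C)) (fun r ↦ by positivity) (fun m ↦ by positivity)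
  refine hmaj.of_norm_bounded fun p ↦ ?_
  simp only [Real.norm_eq_abs, abs_mul, abs_div, abs_pow, Nat.abs_cast, mul_pow]
  calc |x| ^ p.1 / p.1 ! * (|y| ^ p.2 / p.2 ! * |c (p.2 + p.1)|)
      ≤ |x| ^ p.1 / p.1 ! * (|y| ^ p.2 / p.2 ! * (C ^ p.2 * C ^ p.1)) := by
        rw [← pow_add]; gcongr; exact hc _
    _ = _ := by ring

theorem hasSum_pow_div_factorial_mul_shift {c : ℕ → ℝ} {C : ℝ} (hc : ∀ m, |c m| ≤ C ^ m)
    (x y : ℝ) :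
    HasSum (fun r ↦ x ^ r / r ! * ∑' m, y ^ m / m ! * c (m + r))
      (∑' m, (x + y) ^ m / m ! * c m) := by
  have hF := summable_pow_div_factorial_mul_shift hc x y
  have hrows (r : ℕ) : HasSum (fun m ↦ x ^ r / r ! * (y ^ m / m ! * c (m + r)))
      (x ^ r / r ! * ∑' m, y ^ m / m ! * c (m + r)) := by
    simpa only [tsum_mul_left] using (hF.prod_factor r).hasSum
  have hdiag : HasSum (fun n ↦ (x + y) ^ n / n ! * c n)
      (∑' p : ℕ × ℕ, x ^ p.1 / p.1 ! * (y ^ p.2 / p.2 ! * c (p.2 + p.1))) := by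
    convert hF.hasSum.sum_antidiagonal using 2 with n
    rw [add_pow_div_factorial, sum_mul]
    refine sum_congr rfl fun p hp ↦ ?_
    rw [← mem_antidiagonal.mp hp, add_comm p.2]
    ring
  exact hdiag.tsum_eq ▸ hF.hasSum.prod_fiberwise hrows

/-- Addition theorem: `R(ā; q̄; x + y) = Σ_{r=0}^∞ (x^r / r!) R^{(r)}(ā; q̄; y)`, where
`R^{(r)}(ā; q̄; y) = Σ_{m=r}^∞ (y^{m-r}/(m-r)!) (ā; q̄)_m` (reindexed as
`Σ_{m=0}^∞ (y^m/m!) (ā; q̄)_{m+r}`), and the series over `r` converges. -/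
theorem statement5 (n : ℕ) (a q : Fin (n + 1) → ℝ)
    (hq0 : q 0 = 1) (hq : ∀ i : Fin (n + 1), i ≠ 0 → 0 < q i ∧ q i < 1)
    (x y : ℝ) :
    Summable (fun r : ℕ => x ^ r / (Nat.factorial r : ℝ) *
        ∑' m : ℕ,
          y ^ m / (Nat.factorial m : ℝ) * ∏ j ∈ Finset.range (m + r), ∑ i, a i * q i ^ j) ∧
    (∑' m : ℕ,
        (x + y) ^ m / (Nat.factorial m : ℝ) * ∏ j ∈ Finset.range m, ∑ i, a i * q i ^ j) =
      ∑' r : ℕ, x ^ r / (Nat.factorial r : ℝ) *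
        ∑' m : ℕ,
          y ^ m / (Nat.factorial m : ℝ) * ∏ j ∈ Finset.range (m + r), ∑ i, a i * q i ^ j := by
  have hq_abs (i : Fin (n + 1)) : |q i| ≤ 1 := by
    rcases eq_or_ne i 0 with rfl | hi
    · rw [hq0, abs_one]
    · exact abs_le.2 ⟨by linarith [(hq i hi).1], (hq i hi).2.le⟩
  have hsum := hasSum_pow_div_factorial_mul_shift
    (abs_prod_range_le_pow (abs_sum_mul_pow_le a q hq_abs)) x y
  exact ⟨hsum.summable, hsum.tsum_eq.symm⟩
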